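/- Let m be a positive integer or half-integer (2m ∈ ℕ), let n, ν be integers with 0 ≤ n < 2m and 0 ≤ ν ≤ 2m, and let a, b ∈ ℤ. Let τ lie in the upper half-plane and z ∈ ℂ with m·z ∉ ℤ + ℤτ. Then G^{[m]}_{n,ν}(τ, z + 2aτ + 2b) = e^{2πinb} e^{−2πimaz} q^{−ma²} G^{[m]}_{n,ν}(τ, z). -/
import Mathlib


noncomputable section

open Complex

/-- `e2 w = exp (2 π i w)`; with `q = e^{2πiτ}`, the power `q^x` corresponds to `e2 (x * τ)`. -/
def e2 (w : ℂ) : ℂ := Complex.exp (2 * (Real.pi : ℂ) * Complex.I * w)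

/-- Jacobi-type theta function `θ^{(ε)}_{n,m}(τ, z) = ∑_{j∈ℤ} ε^j q^{m(j+n/(2m))²} e^{2πim(j+n/(2m))z}`. -/
def jtheta (ε n m τ z : ℂ) : ℂ :=
  ∑' j : ℤ, ε ^ j *
    e2 (m * ((j : ℂ) + n / (2 * m)) ^ 2 * τ + m * ((j : ℂ) + n / (2 * m)) * z)

/-- Mock theta function `Φ₁^{(ε)[m,s]}(τ, z₁, z₂)`. -/
def Phi1 (ε m s τ z₁ z₂ : ℂ) : ℂ :=
  ∑' j : ℤ, ε ^ j *
    e2 (m * (j : ℂ) * (z₁ + z₂) + s * z₁ + (m * (j : ℂ) ^ 2 + s * (j : ℂ)) * τ) /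
      (1 - e2 (z₁ + (j : ℂ) * τ))

/-- Dedekind eta function `η(τ) = q^{1/24} ∏_{k≥1} (1 - q^k)`. -/
def dedekindEta (τ : ℂ) : ℂ := e2 (τ / 24) * ∏' k : ℕ, (1 - e2 (((k : ℂ) + 1) * τ))

/-- Jacobi theta `ϑ₁₁(τ, z) = i ∑_{j∈ℤ} (−1)^j q^{(j+1/2)²/2} e^{2πi(j+1/2)z}`. -/
def theta11 (τ z : ℂ) : ℂ :=
  Complex.I * ∑' j : ℤ, (-1 : ℂ) ^ j *
    e2 (((j : ℂ) + 1 / 2) ^ 2 / 2 * τ + ((j : ℂ) + 1 / 2) * z)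

/-- Indefinite double sum `(∑_{j,p∈ℤ, 0<p≤j} − ∑_{j,p∈ℤ, j<p≤0}) f j p`. -/
def indefSum (f : ℤ → ℤ → ℂ) : ℂ :=
  ∑' jp : ℤ × ℤ,
    ((if 0 < jp.2 ∧ jp.2 ≤ jp.1 then f jp.1 jp.2 else 0) -
      (if jp.1 < jp.2 ∧ jp.2 ≤ 0 then f jp.1 jp.2 else 0))

/-- `g^{[m]}_{n,ν}(τ)`. -/
def gfun (m : ℂ) (n ν : ℤ) (τ : ℂ) : ℂ :=
  indefSum fun j p =>
    (-1 : ℂ) ^ j *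
      e2 (((m + 1 / 2) * ((j : ℂ) + (ν : ℂ) - ((ν : ℂ) + 1 / 2) / (2 * m + 1)) ^ 2 -
        m * ((p : ℂ) + (ν : ℂ) - (n : ℂ) / (2 * m)) ^ 2) * τ)

/-- `h^{[m]}_{n,ν}(τ, z)`. -/
def hfun (m : ℂ) (n ν : ℤ) (τ z : ℂ) : ℂ :=
  ∑' j : ℤ,
    e2 (m * (j : ℂ) * z + (n : ℂ) * z / 2 +
        (m * (j : ℂ) ^ 2 + (n : ℂ) * ((j : ℂ) + (ν : ℂ))) * τ) /
      (1 - e2 (m * z + 2 * m * ((j : ℂ) + (ν : ℂ)) * τ))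

/-- `G^{[m]}_{n,ν}(τ, z)`. -/
def Gfun (m : ℂ) (n ν : ℤ) (τ z : ℂ) : ℂ :=
  gfun m n ν τ * jtheta 1 (n : ℂ) m τ z +
    (-1 : ℂ) ^ ν * e2 (-(m * (ν : ℂ) ^ 2) * τ) *
      jtheta (-1) ((ν : ℂ) + 1 / 2) (m + 1 / 2) τ 0 * hfun m n ν τ z

/-- `F^{[m](a,b)}_{n,ν}(τ, z)`. -/
def Ffun (m : ℂ) (a b n ν : ℤ) (τ z : ℂ) : ℂ :=
  e2 ((a : ℂ) * z / 2 + (a : ℂ) ^ 2 / (4 * m) * τ) *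
    Gfun m n ν τ (z + (a : ℂ) * τ / m + (b : ℂ) / m)

/-- The coefficient `f_{j,k}` of Lemma 3.1:
`f_{j,k} = (−1)^j q^{(m+1/2)(j+s/(2m+1))² − k²/(4m)} e^{−2πijm(z₁−z₂)+πik(z₁−z₂)}`. -/
def fcoef (m s τ z₁ z₂ : ℂ) (j k : ℤ) : ℂ :=
  (-1 : ℂ) ^ j *
    e2 (((m + 1 / 2) * ((j : ℂ) + s / (2 * m + 1)) ^ 2 - (k : ℂ) ^ 2 / (4 * m)) * τ +
      (-((j : ℂ) * m) + (k : ℂ) / 2) * (z₁ - z₂))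


lemma e2_add (x y : ℂ) : e2 (x + y) = e2 x * e2 y := by
  simp [e2, mul_add, Complex.exp_add]

lemma e2_int (k : ℤ) : e2 (k : ℂ) = 1 := by
  rw [e2, show (2 * (Real.pi : ℂ) * Complex.I * (k : ℂ)) = (k : ℂ) * (2 * Real.pi * Complex.I) by ring]
  exact Complex.exp_int_mul_two_pi_mul_I k

lemma e2_split2 (A Y : ℂ) (k : ℤ) : e2 (A + Y + (k : ℂ)) = e2 A * e2 Y := by
  rw [e2_add (A + Y) (k : ℂ), e2_add A Y, e2_int, mul_one]

lemma e2_split3 (A Y D : ℂ) (k1 k2 : ℤ) :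
    e2 (A + Y + (k1 : ℂ)) / (1 - e2 (D + (k2 : ℂ))) = e2 A * (e2 Y / (1 - e2 D)) := by
  rw [e2_add (A + Y) (k1 : ℂ), e2_add A Y, e2_int, mul_one, e2_add D (k2 : ℂ), e2_int, mul_one,
    mul_div_assoc]

lemma tsum_shift (f : ℤ → ℂ) (a : ℤ) : (∑' j : ℤ, f (j + a)) = ∑' j : ℤ, f j := by
  simpa using (Equiv.addRight a).tsum_eq f

set_option maxHeartbeats 2000000 in
theorem stmt_13 (M : ℕ) (hM : 0 < M) (m : ℂ) (hm : m = (M : ℂ) / 2)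
    (n ν : ℤ) (hn : 0 ≤ n ∧ n < (M : ℤ)) (hν : 0 ≤ ν ∧ ν ≤ (M : ℤ)) (a b : ℤ)
    (τ : ℂ) (hτ : 0 < τ.im) (z : ℂ)
    (hz : ∀ k l : ℤ, m * z ≠ (k : ℂ) + (l : ℂ) * τ) :
    Gfun m n ν τ (z + 2 * (a : ℂ) * τ + 2 * (b : ℂ)) =
      e2 ((n : ℂ) * (b : ℂ)) * e2 (-(m * (a : ℂ) * z)) * e2 (-(m * (a : ℂ) ^ 2) * τ) *
        Gfun m n ν τ z := by
  have hM0 : (M : ℂ) ≠ 0 := Nat.cast_ne_zero.mpr hM.ne'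
  subst hm
  set C : ℂ := e2 ((n : ℂ) * b - (M : ℂ) / 2 * a * z - (M : ℂ) / 2 * a ^ 2 * τ) with hC
  have hθ : jtheta 1 (n : ℂ) ((M : ℂ)/2) τ (z + 2 * (a : ℂ) * τ + 2 * (b : ℂ)) = C * jtheta 1 (n : ℂ) ((M : ℂ)/2) τ z := by
    unfold jtheta
    calc (∑' j : ℤ, (1:ℂ) ^ j * e2 ((M : ℂ)/2 * ((j : ℂ) + (n:ℂ) / (2 * ((M : ℂ)/2))) ^ 2 * τ + (M : ℂ)/2 * ((j : ℂ) + (n:ℂ) / (2 * ((M : ℂ)/2))) * (z + 2 * (a : ℂ) * τ + 2 * (b : ℂ))))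
        = ∑' j : ℤ, (fun j : ℤ => C * ((1:ℂ) ^ j * e2 ((M : ℂ)/2 * ((j : ℂ) + (n:ℂ) / (2 * ((M : ℂ)/2))) ^ 2 * τ + (M : ℂ)/2 * ((j : ℂ) + (n:ℂ) / (2 * ((M : ℂ)/2))) * z))) (j + a) := by
          refine tsum_congr fun j => ?_
          simp only [one_zpow, one_mul]
          rw [show ((M : ℂ)/2 * ((j : ℂ) + (n:ℂ) / (2 * ((M : ℂ)/2))) ^ 2 * τ + (M : ℂ)/2 * ((j : ℂ) + (n:ℂ) / (2 * ((M : ℂ)/2))) * (z + 2 * (a : ℂ) * τ + 2 * (b : ℂ))) = ((n : ℂ) * b - (M : ℂ) / 2 * a * z - (M : ℂ) / 2 * a ^ 2 * τ) + ((M : ℂ)/2 * (((j + a : ℤ) : ℂ) + (n:ℂ) / (2 * ((M : ℂ)/2))) ^ 2 * τ + (M : ℂ)/2 * (((j + a : ℤ) : ℂ) + (n:ℂ) / (2 * ((M : ℂ)/2))) * z) + (((M : ℤ) * j * b : ℤ) : ℂ) by push_cast; rw [show (2:ℂ)*((M:ℂ)/2) = (M:ℂ) by ring]; field_simp [hM0];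 ring, hC]
          exact e2_split2 _ _ _
      _ = ∑' j : ℤ, C * ((1:ℂ) ^ j * e2 ((M : ℂ)/2 * ((j : ℂ) + (n:ℂ) / (2 * ((M : ℂ)/2))) ^ 2 * τ + (M : ℂ)/2 * ((j : ℂ) + (n:ℂ) / (2 * ((M : ℂ)/2))) * z)) := tsum_shift (fun j : ℤ => C * ((1:ℂ) ^ j * e2 ((M : ℂ)/2 * ((j : ℂ) + (n:ℂ) / (2 * ((M : ℂ)/2))) ^ 2 * τ + (M : ℂ)/2 * ((j : ℂ) + (n:ℂ) / (2 * ((M : ℂ)/2))) * z))) a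
      _ = C * ∑' j : ℤ, (1:ℂ) ^ j * e2 ((M : ℂ)/2 * ((j : ℂ) + (n:ℂ) / (2 * ((M : ℂ)/2))) ^ 2 * τ + (M : ℂ)/2 * ((j : ℂ) + (n:ℂ) / (2 * ((M : ℂ)/2))) * z) := tsum_mul_left
  have hh : hfun ((M : ℂ)/2) n ν τ (z + 2 * (a : ℂ) * τ + 2 * (b : ℂ)) = C * hfun ((M : ℂ)/2) n ν τ z := by
    unfold hfun
    calc (∑' j : ℤ, e2 ((M : ℂ)/2 * (j : ℂ) * (z + 2 * (a : ℂ) * τ + 2 * (b : ℂ)) + (n : ℂ) * (z + 2 * (a : ℂ) * τ + 2 * (b : ℂ)) / 2 + ((M : ℂ)/2 * (j : ℂ) ^ 2 + (n : ℂ) * ((j : ℂ) + (ν : ℂ))) * τ) / (1 - e2 ((M : ℂ)/2 * (z + 2 * (a : ℂ) * τ + 2 * (b : ℂ)) + 2 * ((M : ℂ)/2) * ((j : ℂ) + (ν : ℂ)) * τ)))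
        = ∑' j : ℤ, (fun j : ℤ => C * (e2 ((M : ℂ)/2 * (j : ℂ) * z + (n : ℂ) * z / 2 + ((M : ℂ)/2 * (j : ℂ) ^ 2 + (n : ℂ) * ((j : ℂ) + (ν : ℂ))) * τ) / (1 - e2 ((M : ℂ)/2 * z + 2 * ((M : ℂ)/2) * ((j : ℂ) + (ν : ℂ)) * τ)))) (j + a) := by
          refine tsum_congr fun j => ?_
          simp only
          rw [show ((M : ℂ)/2 * (j : ℂ) * (z + 2 * (a : ℂ) * τ + 2 * (b : ℂ)) + (n : ℂ) * (z + 2 * (a : ℂ) * τ + 2 * (b : ℂ)) / 2 + ((M : ℂ)/2 * (j : ℂ) ^ 2 + (n : ℂ) * ((j : ℂ) + (ν : ℂ))) * τ) = ((n : ℂ) * b - (M : ℂ) / 2 * a * z - (M : ℂ) / 2 * a ^ 2 * τ) + ((M : ℂ)/2 * ((j + a : ℤ) : ℂ) * z + (n : ℂ) * z / 2 + ((M : ℂ)/2 * ((j + a : ℤ) : ℂ) ^ 2 + (n : ℂ) * (((j + a : ℤ) : ℂ) + (ν : ℂ))) * τ) + (((M : ℤ) * j * b : ℤ) : ℂ)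 by push_cast; ring,
            show ((M : ℂ)/2 * (z + 2 * (a : ℂ) * τ + 2 * (b : ℂ)) + 2 * ((M : ℂ)/2) * ((j : ℂ) + (ν : ℂ)) * τ) = ((M : ℂ)/2 * z + 2 * ((M : ℂ)/2) * (((j + a : ℤ) : ℂ) + (ν : ℂ)) * τ) + (((M : ℤ) * b : ℤ) : ℂ) by push_cast; ring, hC]
          exact e2_split3 _ _ _ _ _
      _ = ∑' j : ℤ, C * (e2 ((M : ℂ)/2 * (j : ℂ) * z + (n : ℂ) * z / 2 + ((M : ℂ)/2 * (j : ℂ) ^ 2 + (n : ℂ) * ((j : ℂ) + (ν : ℂ))) * τ) / (1 - e2 ((M : ℂ)/2 * z + 2 * ((M : ℂ)/2) * ((j : ℂ) + (ν : ℂ)) * τ))) := tsum_shift (fun j : ℤ => C * (e2 ((M : ℂ)/2 * (j : ℂ) * z + (n : ℂ) * z / 2 + ((M : ℂ)/2 * (j : ℂ) ^ 2 + (n : ℂ) * ((j : ℂ) + (ν : ℂ))) * τ) / (1 - e2 ((M : ℂ)/2 * z + 2 * ((M : ℂ)/2) * ((j : ℂ) + (ν : ℂ)) * τ)))) a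
      _ = C * ∑' j : ℤ, e2 ((M : ℂ)/2 * (j : ℂ) * z + (n : ℂ) * z / 2 + ((M : ℂ)/2 * (j : ℂ) ^ 2 + (n : ℂ) * ((j : ℂ) + (ν : ℂ))) * τ) / (1 - e2 ((M : ℂ)/2 * z + 2 * ((M : ℂ)/2) * ((j : ℂ) + (ν : ℂ)) * τ)) := tsum_mul_left
  have hCsplit : e2 ((n : ℂ) * (b : ℂ)) * e2 (-((M : ℂ)/2 * (a : ℂ) * z)) *
      e2 (-((M : ℂ)/2 * (a : ℂ) ^ 2) * τ) = C := by
    rw [hC, ← e2_add, ← e2_add]; ring_nf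
  rw [Gfun, Gfun, hθ, hh, ← hCsplit]; ring
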